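/- Fix an integer c ≥ 2 and p ∈ (0,1). Let X₁, …, X_c be i.i.d. Bernoulli(p) random variables, let J be uniformly distributed on {1, …, c} and independent of (X₁, …, X_c), and set Y = X_J (the interleaving attack). Let g be the score function g(0,0,p) = ln(1 + p/(c(1−p))), g(0,1,p) = g(1,0,p) = ln(1 − 1/c), g(1,1,p) = ln(1 + (1−p)/(cp)). Then the per-segment expected score of the colluder X₁, namely E[g(X₁, Y, p)] = ∑_{x,y ∈ {0,1}} P(X₁ = x, Y = y) · g(x,y,p), is strictly positive, and the per-segment expected score of an innocent user, namely ∑_{x,y ∈ {0,1}} P(X₁ = x)·P(Y = y)·g(x,y,p), is strictly negative. -/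

import Mathlib

open MeasureTheory ProbabilityTheory ENNReal

/-- The interleaving log-likelihood score function `g(x,y,p)` of the paper
(with the bit `1` encoded as `true` and `0` as `false`):
`g(0,0,p) = ln(1 + p/(c(1−p)))`, `g(0,1,p) = g(1,0,p) = ln(1 − 1/c)`,
`g(1,1,p) = ln(1 + (1−p)/(cp))`. -/
noncomputable def intScore (c : ℕ) (x y : Bool) (p : ℝ) : ℝ :=
  match x, y with
  | false, false => Real.log (1 + p / ((c : ℝ) * (1 - p)))
  | true, true => Real.log (1 + (1 - p) / ((c : ℝ) * p))
  | _, _ => Real.log (1 - 1 / (c : ℝ))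

/-!
The score is `g(x, y) = log (q(x, y) / r(x, y))`, where `q` is the joint law of `(X₁, Y)` and `r` is
the product of its marginals (both Bernoulli(`p`)). Hence the guilty drift is `KL(q ‖ r)` and the
innocent drift is `-KL(r ‖ q)`, and Gibbs' inequality makes both strict because `q ≠ r`:
`q(1, 0) = (1 - 1/c) p (1 - p) < r(1, 0)`.
-/

open Real Finset

section Gibbs

theorem sub_lt_mul_log_div {a b : ℝ} (ha : 0 < a) (hb : 0 < b) (hab : a ≠ b) :
    a - b < a * log (a / b) := by
  have hba : b / a ≠ 1 := fun h => hab ((div_eq_one_iff_eq ha.ne').1 h).symm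
  have hlog := log_lt_sub_one_of_pos (div_pos hb ha) hba
  calc a - b = a * (1 - b / a) := by field_simp
    _ < a * -log (b / a) := by gcongr; linarith
    _ = a * log (a / b) := by rw [← Real.log_inv, inv_div]

variable {ι : Type*} [Fintype ι] {q r : ι → ℝ}

theorem sum_mul_log_div_pos (hq : ∀ i, 0 < q i) (hr : ∀ i, 0 < r i)
    (hsum : ∑ i, q i = ∑ i, r i) (hne : q ≠ r) : 0 < ∑ i, q i * log (q i / r i) := by
  obtain ⟨i, hi⟩ := Function.ne_iff.1 hne
  have hle : ∀ j ∈ univ, q j - r j ≤ q j * log (q j / r j) := fun j _ => by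
    by_cases hj : q j = r j
    · simp [hj]
    · exact (sub_lt_mul_log_div (hq j) (hr j) hj).le
  calc 0 = ∑ j, (q j - r j) := by rw [sum_sub_distrib, hsum, sub_self]
    _ < ∑ j, q j * log (q j / r j) :=
      sum_lt_sum hle ⟨i, mem_univ i, sub_lt_mul_log_div (hq i) (hr i) hi⟩

theorem sum_mul_log_div_neg (hq : ∀ i, 0 < q i) (hr : ∀ i, 0 < r i)
    (hsum : ∑ i, q i = ∑ i, r i) (hne : q ≠ r) : ∑ i, r i * log (q i / r i) < 0 := by
  have hpos := sum_mul_log_div_pos hr hq hsum.symm hne.symm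
  simp_rw [← inv_div (r _), Real.log_inv, mul_neg, sum_neg_distrib]
  linarith

end Gibbs

noncomputable def bernoulliMass (p : ℝ) (b : Bool) : ℝ := if b then p else 1 - p

/-- With probability `1/c` the interleaving index `J` hits `i`, and then `X i = X J`; otherwise
the two symbols are independent. -/
noncomputable def interleavedMass (c : ℕ) (p : ℝ) (x y : Bool) : ℝ :=
  (if x = y then bernoulliMass p x else 0) / c +
    (1 - 1 / c) * (bernoulliMass p x * bernoulliMass p y)

section Masses

variable {c : ℕ} {p : ℝ}

theorem bernoulliMass_pos (hp : p ∈ Set.Ioo 0 1) (b : Bool) : 0 < bernoulliMass p b := by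
  cases b <;> simp [bernoulliMass, hp.1, hp.2]

theorem interleavedMass_pos (hc : 1 < c) (hp : p ∈ Set.Ioo 0 1) (x y : Bool) :
    0 < interleavedMass c p x y := by
  have hcoef : 0 < 1 - 1 / (c : ℝ) := by
    rw [sub_pos, div_lt_one (by positivity)]
    exact_mod_cast hc
  have hdiag : 0 ≤ (if x = y then bernoulliMass p x else 0) / c := by
    split_ifs
    · exact div_nonneg (bernoulliMass_pos hp x).le c.cast_nonneg
    · simp
  exact add_pos_of_nonneg_of_pos hdiag
    (mul_pos hcoef (mul_pos (bernoulliMass_pos hp x) (bernoulliMass_pos hp y)))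

theorem sum_interleavedMass_eq_sum_mul (hc : c ≠ 0) :
    ∑ z : Bool × Bool, interleavedMass c p z.1 z.2 =
      ∑ z : Bool × Bool, bernoulliMass p z.1 * bernoulliMass p z.2 := by
  simp only [Fintype.sum_prod_type, Fintype.sum_bool, interleavedMass, bernoulliMass,
    ↓reduceIte, Bool.true_eq_false, Bool.false_eq_true, zero_div, zero_add]
  field_simp
  ring

theorem interleavedMass_ne_mul (hc : c ≠ 0) (hp : p ∈ Set.Ioo 0 1) :
    (fun z : Bool × Bool => interleavedMass c p z.1 z.2) ≠
      fun z => bernoulliMass p z.1 * bernoulliMass p z.2 := by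
  intro h
  have hpq : p * (1 - p) ≠ 0 := mul_ne_zero hp.1.ne' (sub_ne_zero.2 hp.2.ne')
  have hTF := congrFun h (true, false)
  simp only [interleavedMass, bernoulliMass, Bool.true_eq_false, Bool.false_eq_true, ↓reduceIte,
    zero_div, zero_add, one_div] at hTF
  have : (c : ℝ)⁻¹ * (p * (1 - p)) = 0 := by linarith
  simp [hc, hpq] at this

theorem intScore_eq_log_div (hc : c ≠ 0) (hp : p ∈ Set.Ioo 0 1) (x y : Bool) :
    intScore c x y p =
      Real.log (interleavedMass c p x y / (bernoulliMass p x * bernoulliMass p y)) := by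
  have hp0 := hp.1.ne'
  have hp1 : 1 - p ≠ 0 := sub_ne_zero.2 hp.2.ne'
  cases x <;> cases y <;>
    simp only [intScore, interleavedMass, bernoulliMass, ↓reduceIte, Bool.true_eq_false,
      Bool.false_eq_true, zero_div, zero_add] <;>
    congr 1 <;> field_simp <;> ring

end Masses

section Interleaving

variable {Ω : Type*} [MeasurableSpace Ω] {P : Measure Ω}

theorem ProbabilityTheory.IndepFun.measureReal_inter_preimage_eq_mul {β γ : Type*}
    [MeasurableSpace β] [MeasurableSpace γ] {f : Ω → β} {g : Ω → γ} (h : IndepFun f g P)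
    {s : Set β} {t : Set γ} (hs : MeasurableSet s) (ht : MeasurableSet t) :
    P.real (f ⁻¹' s ∩ g ⁻¹' t) = P.real (f ⁻¹' s) * P.real (g ⁻¹' t) := by
  simp only [measureReal_def, h.measure_inter_preimage_eq_mul _ _ hs ht, toReal_mul]

theorem measureReal_setOf_mem_of_indepFun [IsFiniteMeasure P] {ι β : Type*} [Fintype ι]
    [MeasurableSpace ι] [MeasurableSingletonClass ι] [MeasurableSpace β] {V : Ω → β} {J : Ω → ι}
    (hV : Measurable V) (hJ : Measurable J) (hind : IndepFun V J P) {S : ι → Set β}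
    (hS : ∀ j, MeasurableSet (S j)) :
    P.real {ω | V ω ∈ S (J ω)} = ∑ j, P.real (V ⁻¹' S j) * P.real {ω | J ω = j} := by
  have hunion : {ω | V ω ∈ S (J ω)} = ⋃ j, V ⁻¹' S j ∩ J ⁻¹' {j} := by
    ext ω
    simp
  rw [hunion, measureReal_iUnion_fintype]
  · exact sum_congr rfl fun j _ => hind.measureReal_inter_preimage_eq_mul (hS j) (.singleton j)
  · intro i j hij
    exact Set.disjoint_left.2 fun ω hi hj => hij (hi.2.symm.trans hj.2)
  · exact fun j => (hV (hS j)).inter (hJ (.singleton j))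

end Interleaving

section InterleavingAttack

variable {Ω : Type*} [MeasurableSpace Ω] {P : Measure Ω} [IsProbabilityMeasure P] {c : ℕ} {p : ℝ}
  {X : Fin c → Ω → Bool} {J : Ω → Fin c}

theorem measureReal_eq_bernoulliMass {Y : Ω → Bool} (hY : Measurable Y) (hp : 0 ≤ p)
    (hbern : P {ω | Y ω = true} = ENNReal.ofReal p) (b : Bool) :
    P.real {ω | Y ω = b} = bernoulliMass p b := by
  have htrue : P.real {ω | Y ω = true} = p := by rw [measureReal_def, hbern, toReal_ofReal hp]
  cases b
  · have hcompl : {ω | Y ω = false} = {ω | Y ω = true}ᶜ := by ext; simp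
    rw [hcompl, probReal_compl_eq_one_sub (s := {ω | Y ω = true}) (hY (.singleton true)), htrue]
    rfl
  · exact htrue

theorem measureReal_interleaved_eq_bernoulliMass (hc : c ≠ 0) (hXmeas : ∀ i, Measurable (X i))
    (hJmeas : Measurable J) (hp : 0 ≤ p) (hXbern : ∀ i, P {ω | X i ω = true} = ENNReal.ofReal p)
    (hJunif : ∀ j : Fin c, P {ω | J ω = j} = (c : ℝ≥0∞)⁻¹)
    (hXJindep : IndepFun (fun ω i => X i ω) J P) (y : Bool) :
    P.real {ω | X (J ω) ω = y} = bernoulliMass p y := by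
  refine (measureReal_setOf_mem_of_indepFun (measurable_pi_lambda _ hXmeas) hJmeas hXJindep
    (S := fun j => {v | v j = y}) fun _ => .of_discrete).trans ?_
  have hterm : ∀ j, P.real {ω | X j ω = y} * P.real {ω | J ω = j} =
      bernoulliMass p y * (c : ℝ)⁻¹ := fun j => by
    rw [measureReal_eq_bernoulliMass (hXmeas j) hp (hXbern j), measureReal_def, hJunif j]
    simp
  simp only [Set.preimage_ofPred_eq, hterm, sum_const, card_univ, Fintype.card_fin, nsmul_eq_mul]
  field_simp

theorem measureReal_joint_interleaved_eq_interleavedMass (hXmeas : ∀ i, Measurable (X i))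
    (hJmeas : Measurable J) (hp : 0 ≤ p) (hXbern : ∀ i, P {ω | X i ω = true} = ENNReal.ofReal p)
    (hXindep : iIndepFun X P)
    (hJunif : ∀ j : Fin c, P {ω | J ω = j} = (c : ℝ≥0∞)⁻¹)
    (hXJindep : IndepFun (fun ω i => X i ω) J P) (i : Fin c) (x y : Bool) :
    P.real {ω | X i ω = x ∧ X (J ω) ω = y} = interleavedMass c p x y := by
  refine (measureReal_setOf_mem_of_indepFun (measurable_pi_lambda _ hXmeas) hJmeas hXJindep
    (S := fun j => {v | v i = x ∧ v j = y}) fun _ => .of_discrete).trans ?_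
  have hdiag : P.real {ω | X i ω = x ∧ X i ω = y} = if x = y then bernoulliMass p x else 0 := by
    split_ifs with hxy
    · simp only [hxy, and_self, measureReal_eq_bernoulliMass (hXmeas i) hp (hXbern i)]
    · have hempty : {ω | X i ω = x ∧ X i ω = y} = ∅ := by
        ext ω
        simpa using fun h => (hxy <| h.symm.trans ·)
      simp [hempty]
  have hoff : ∀ j ∈ univ.erase i,
      P.real {ω | X i ω = x ∧ X j ω = y} = bernoulliMass p x * bernoulliMass p y := fun j hj => by
    rw [← measureReal_eq_bernoulliMass (hXmeas i) hp (hXbern i),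
      ← measureReal_eq_bernoulliMass (hXmeas j) hp (hXbern j)]
    exact (hXindep.indepFun (ne_of_mem_erase hj).symm).measureReal_inter_preimage_eq_mul
      (.singleton x) (.singleton y)
  have hJ : ∀ j, P.real {ω | J ω = j} = (c : ℝ)⁻¹ := fun j => by simp [measureReal_def, hJunif j]
  simp only [Set.preimage_ofPred_eq, hJ, ← sum_mul]
  rw [← add_sum_erase _ _ (mem_univ i), hdiag, sum_congr rfl hoff, sum_const,
    card_erase_of_mem (mem_univ i), card_univ, Fintype.card_fin, nsmul_eq_mul,
    Nat.cast_pred i.pos, interleavedMass]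
  have hc : (c : ℝ) ≠ 0 := Nat.cast_ne_zero.2 i.pos.ne'
  field_simp

end InterleavingAttack

/-- **Positive guilty drift and negative innocent drift for the interleaving decoder.**
Let `X 0, …, X (c−1)` be i.i.d. Bernoulli(`p`), let `J` be uniform on `Fin c` and
independent of the vector `(X i)ᵢ`, and set `Y = X J` (the interleaving attack).  Then
the expected per-segment score of the colluder `X 0`, namely
`∑_{x,y} P(X₁ = x, Y = y)·g(x,y,p)`, is strictly positive, and the expected per-segment
score of an innocent user, namely `∑_{x,y} P(X₁ = x)·P(Y = y)·g(x,y,p)`, is strictly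
negative. -/
theorem interleaving_drifts
    {Ω : Type*} [MeasurableSpace Ω] (P : Measure Ω) [IsProbabilityMeasure P]
    (c : ℕ) (hc : 2 ≤ c) (p : ℝ) (hp : p ∈ Set.Ioo (0 : ℝ) 1)
    (X : Fin c → Ω → Bool) (J : Ω → Fin c)
    (hXmeas : ∀ i, Measurable (X i)) (hJmeas : Measurable J)
    (hXbern : ∀ i, P {ω | X i ω = true} = ENNReal.ofReal p)
    (hXindep : iIndepFun X P)
    (hJunif : ∀ j : Fin c, P {ω | J ω = j} = (c : ℝ≥0∞)⁻¹)
    (hXJindep : IndepFun (fun ω i => X i ω) J P) :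
    (0 < ∑ x : Bool, ∑ y : Bool,
        (P {ω | X ⟨0, by omega⟩ ω = x ∧ X (J ω) ω = y}).toReal * intScore c x y p) ∧
    (∑ x : Bool, ∑ y : Bool,
        (P {ω | X ⟨0, by omega⟩ ω = x}).toReal * (P {ω | X (J ω) ω = y}).toReal *
          intScore c x y p) < 0 := by
  have hc0 : c ≠ 0 := by omega
  set i₀ : Fin c := ⟨0, by omega⟩
  have hX := measureReal_eq_bernoulliMass (hXmeas i₀) hp.1.le (hXbern i₀)
  have hY := measureReal_interleaved_eq_bernoulliMass hc0 hXmeas hJmeas hp.1.le hXbern hJunif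
    hXJindep
  have hXY := measureReal_joint_interleaved_eq_interleavedMass hXmeas hJmeas hp.1.le hXbern
    hXindep hJunif hXJindep i₀
  simp only [← measureReal_def, hX, hY, hXY, intScore_eq_log_div hc0 hp, ← Fintype.sum_prod_type']
  have hq (z : Bool × Bool) := interleavedMass_pos (by omega : 1 < c) hp z.1 z.2
  have hr (z : Bool × Bool) := mul_pos (bernoulliMass_pos hp z.1) (bernoulliMass_pos hp z.2)
  have hsum := sum_interleavedMass_eq_sum_mul (p := p) hc0
  have hne := interleavedMass_ne_mul hc0 hp
  exact ⟨sum_mul_log_div_pos hq hr hsum hne, sum_mul_log_div_neg hq hr hsum hne⟩
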